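/- arXiv:cs/0605077 — 4 statements merged into one kernel-verified Lean document; each statement's English description precedes it below -/
import Mathlib

section
/- For probability distributions P and Q on a finite product alphabet A^n × A^n (clean and noisy pairs), the excess expected single-letter loss of the Bayes filter matched to Q compared to the Bayes filter matched to P is at most Λ_max times the total variation (L1) distance between P and Q: E_P[ℓ(X, X̂_Q(Z))] − E_P[ℓ(X, X̂_P(Z))] ≤ Λ_max · Σ_{x,z} |P(x,z) − Q(x,z)|. -/
open Finset

/-- Excess expected single-letter loss of the Bayes filter matched
to `Q` over the Bayes filter matched to `P` is at most `Λmax` times the total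
variation (L1) distance between the joint laws `P` and `Q`. -/
theorem excess_bayes_loss_le_total_variation
    {A : Type*} [Fintype A] [Nonempty A]
    (P Q : A × A → ℝ) (hP0 : ∀ p, 0 ≤ P p) (hQ0 : ∀ p, 0 ≤ Q p)
    (hP1 : ∑ p, P p = 1) (hQ1 : ∑ p, Q p = 1)
    (Λ : A → A → ℝ) (hΛ0 : ∀ i j, 0 ≤ Λ i j)
    (Λmax : ℝ) (hΛmax : ∀ i j, Λ i j ≤ Λmax)
    (fP fQ : A → A)
    (hfP : ∀ z a, (∑ x, Λ x (fP z) * P (x, z)) ≤ ∑ x, Λ x a * P (x, z))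
    (hfQ : ∀ z a, (∑ x, Λ x (fQ z) * Q (x, z)) ≤ ∑ x, Λ x a * Q (x, z)) :
    (∑ x, ∑ z, P (x, z) * Λ x (fQ z)) - (∑ x, ∑ z, P (x, z) * Λ x (fP z))
      ≤ Λmax * ∑ x, ∑ z, |P (x, z) - Q (x, z)| := by
  rw [Finset.sum_comm (f := fun x z => P (x, z) * Λ x (fQ z)),
      Finset.sum_comm (f := fun x z => P (x, z) * Λ x (fP z)),
      Finset.sum_comm (f := fun x z => |P (x, z) - Q (x, z)|),
      ← Finset.sum_sub_distrib, Finset.mul_sum]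
  apply Finset.sum_le_sum
  intro z _
  have hQle : (∑ x, Q (x, z) * Λ x (fQ z)) - (∑ x, Q (x, z) * Λ x (fP z)) ≤ 0 := by
    have := hfQ z (fP z)
    simp only [mul_comm] at this ⊢
    linarith
  have key : ∀ x : A, P (x, z) * Λ x (fQ z) - P (x, z) * Λ x (fP z)
      ≤ Λmax * |P (x, z) - Q (x, z)|
        + (Q (x, z) * Λ x (fQ z) - Q (x, z) * Λ x (fP z)) := by
    intro x
    have h1 : (P (x, z) - Q (x, z)) * (Λ x (fQ z) - Λ x (fP z))
        ≤ |P (x, z) - Q (x, z)| * Λmax := by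
      calc (P (x, z) - Q (x, z)) * (Λ x (fQ z) - Λ x (fP z))
          ≤ |(P (x, z) - Q (x, z)) * (Λ x (fQ z) - Λ x (fP z))| := le_abs_self _
        _ = |P (x, z) - Q (x, z)| * |Λ x (fQ z) - Λ x (fP z)| := abs_mul _ _
        _ ≤ |P (x, z) - Q (x, z)| * Λmax := by
            apply mul_le_mul_of_nonneg_left _ (abs_nonneg _)
            rw [abs_sub_le_iff]
            constructor <;> [skip; skip] <;>
              linarith [hΛmax x (fQ z), hΛmax x (fP z), hΛ0 x (fQ z), hΛ0 x (fP z)]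
    nlinarith [h1]
  calc (∑ x, P (x, z) * Λ x (fQ z)) - ∑ x, P (x, z) * Λ x (fP z)
      = ∑ x, (P (x, z) * Λ x (fQ z) - P (x, z) * Λ x (fP z)) := by
        rw [Finset.sum_sub_distrib]
    _ ≤ ∑ x, (Λmax * |P (x, z) - Q (x, z)|
          + (Q (x, z) * Λ x (fQ z) - Q (x, z) * Λ x (fP z))) :=
        Finset.sum_le_sum fun x _ => key x
    _ = (∑ x, Λmax * |P (x, z) - Q (x, z)|)
          + ((∑ x, Q (x, z) * Λ x (fQ z)) - ∑ x, Q (x, z) * Λ x (fP z)) := by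
        rw [Finset.sum_add_distrib, Finset.sum_sub_distrib]
    _ ≤ ∑ x, Λmax * |P (x, z) - Q (x, z)| := by linarith
    _ = Λmax * ∑ x, |P (x, z) - Q (x, z)| := by rw [Finset.mul_sum]
end

section
/- Let P and Q be probability distributions on a finite set and suppose Q is the Bayes-optimal law; then combining the two bounds: E_P[ℓ(X, X̂_Q^ε(Z))] − E_P[ℓ(X, X̂_P(Z))] ≤ Λ_max · K_Π · ‖P_Z − Q_Z‖_1 + C_Λ · ε, where X̂_Q^ε is the ε-randomized Bayes filter X̂_Q^ε(z)[x̂] = Pr(B(Q_{X|z} + U) = x̂) with U uniform on the L2 ε-ball, K_Π = Σ_i ‖Π_i^{-1}‖_2, and C_Λ = max_{a,b} ‖λ_a − λ_b‖_2. -/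
/-!
Write `c x z` for the expected loss of the randomized `Q`-filter and `d x z := Λ x (fP z)`; both
lie in `[0, Λmax]`. Since `Π` is row-stochastic, replacing the input law `P` by `Q` changes
`E[c - d]` by at most `Λmax ‖P_X - Q_X‖₁`, and `P_X - Q_X = (P_Z - Q_Z) Π⁻¹` turns this into
`Λmax K_Π ‖P_Z - Q_Z‖₁`. Under `Q`, conditionally on `z`, each response `a = B(Q_{X|z} + U)`
with `‖U‖ ≤ ε` has posterior loss at most `C_Λ ε` above that of any response `b`, by
Cauchy–Schwarz applied to `⟨λ_b - λ_a, U⟩`; hence `E_Q[c - d] ≤ C_Λ ε`.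
-/

open Finset MeasureTheory

noncomputable def bayesResponse {M : ℕ} [NeZero M]
    (Λ : Fin M → Fin M → ℝ) (V : Fin M → ℝ) : Fin M := by
  classical
  exact if h : (Finset.univ.filter fun a : Fin M =>
      ∀ b, (∑ x, Λ x a * V x) ≤ ∑ x, Λ x b * V x).Nonempty
    then (Finset.univ.filter fun a : Fin M =>
      ∀ b, (∑ x, Λ x a * V x) ≤ ∑ x, Λ x b * V x).min' h
    else 0

open Matrix

section BayesResponse

variable {M : ℕ} [NeZero M] (Λ : Fin M → Fin M → ℝ)

lemma bayesResponse_eq_iff (V : Fin M → ℝ) (a : Fin M) :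
    bayesResponse Λ V = a ↔
      (∀ b, ∑ x, Λ x a * V x ≤ ∑ x, Λ x b * V x) ∧
        ∀ a', (∀ b, ∑ x, Λ x a' * V x ≤ ∑ x, Λ x b * V x) → a ≤ a' := by
  classical
  have hne : (univ.filter fun a : Fin M => ∀ b, ∑ x, Λ x a * V x ≤ ∑ x, Λ x b * V x).Nonempty := by
    obtain ⟨a, -, ha⟩ := exists_min_image univ (fun a : Fin M => ∑ x, Λ x a * V x) univ_nonempty
    exact ⟨a, mem_filter.2 ⟨mem_univ a, fun b => ha b (mem_univ b)⟩⟩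
  unfold bayesResponse
  rw [dif_pos hne]
  trans IsLeast (univ.filter fun a : Fin M => ∀ b, ∑ x, Λ x a * V x ≤ ∑ x, Λ x b * V x : Set _) a
  · exact ⟨fun h => h ▸ isLeast_min' _ hne, (isLeast_min' _ hne).unique⟩
  · simp [IsLeast, mem_lowerBounds]

lemma bayesResponse_le (V : Fin M → ℝ) (b : Fin M) :
    ∑ x, Λ x (bayesResponse Λ V) * V x ≤ ∑ x, Λ x b * V x :=
  ((bayesResponse_eq_iff Λ V _).1 rfl).1 b

lemma measurable_bayesResponse : Measurable (bayesResponse Λ) := by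
  have hmin : ∀ a : Fin M, Measurable fun V : Fin M → ℝ =>
      ∀ b, ∑ x, Λ x a * V x ≤ ∑ x, Λ x b * V x := fun a =>
    .forall fun b => measurableSet_setOfPred.1 <|
      measurableSet_le (f := fun V : Fin M → ℝ => ∑ x, Λ x a * V x) (by fun_prop) (by fun_prop)
  refine measurable_to_countable' fun a => ?_
  simp only [Set.preimage, Set.mem_singleton_iff, bayesResponse_eq_iff]
  exact ((hmin a).and (.forall fun a' => (hmin a').imp measurable_const)).setOf

end BayesResponse

section UniformBallLaw

variable {E ι : Type*} [NormedAddCommGroup E] [MeasurableSpace E] (μ : Measure E)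

noncomputable def uniformBallLaw (ε : ℝ) (f : E → ι) (i : ι) : ℝ :=
  (μ {U | ‖U‖ ≤ ε ∧ f U = i}).toReal / (μ {U | ‖U‖ ≤ ε}).toReal

variable {ε : ℝ} {f : E → ι}

lemma uniformBallLaw_nonneg (i : ι) : 0 ≤ uniformBallLaw μ ε f i := by
  unfold uniformBallLaw; positivity

lemma exists_of_uniformBallLaw_ne_zero {i : ι} (h : uniformBallLaw μ ε f i ≠ 0) :
    ∃ U, ‖U‖ ≤ ε ∧ f U = i :=
  nonempty_of_measure_ne_zero (μ := μ) (s := {U | ‖U‖ ≤ ε ∧ f U = i}) fun h0 =>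
    h (by simp [uniformBallLaw, h0])

variable [Fintype ι] [ProperSpace E] [IsFiniteMeasureOnCompacts μ] [μ.IsOpenPosMeasure]
  [MeasurableSpace ι] [MeasurableSingletonClass ι]

lemma sum_uniformBallLaw (hε : 0 < ε) (hf : Measurable f) :
    ∑ i, uniformBallLaw μ ε f i = 1 := by
  have hball : {U : E | ‖U‖ ≤ ε} = Metric.closedBall 0 ε :=
    Set.ext fun _ => mem_closedBall_zero_iff.symm
  have hfiber : ∀ i, {U | ‖U‖ ≤ ε ∧ f U = i} = f ⁻¹' {i} ∩ Metric.closedBall 0 ε := by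
    intro i; ext U; simp [and_comm]
  have hsum : ∑ i, μ {U | ‖U‖ ≤ ε ∧ f U = i} = μ (Metric.closedBall 0 ε) := by
    simp_rw [hfiber, ← Measure.restrict_apply (hf (measurableSet_singleton _))]
    rw [sum_measure_preimage_singleton _ fun i _ => hf (measurableSet_singleton i)]
    simp
  have hfin : ∀ i ∈ (univ : Finset ι), μ {U | ‖U‖ ≤ ε ∧ f U = i} ≠ ⊤ := fun i _ =>
    ((measure_mono fun U hU => mem_closedBall_zero_iff.2 hU.1).trans_lt
      measure_closedBall_lt_top).ne
  simp only [uniformBallLaw]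
  rw [← sum_div, ← ENNReal.toReal_sum hfin, hsum, hball]
  exact div_self (ENNReal.toReal_pos (Metric.measure_closedBall_pos μ 0 hε).ne'
    measure_closedBall_lt_top.ne).ne'

lemma sum_mul_uniformBallLaw_le (hε : 0 < ε) (hf : Measurable f)
    (g : ι → ℝ) {c : ℝ} (hg : ∀ U, ‖U‖ ≤ ε → g (f U) ≤ c) :
    ∑ i, g i * uniformBallLaw μ ε f i ≤ c := by
  calc ∑ i, g i * uniformBallLaw μ ε f i ≤ ∑ i, c * uniformBallLaw μ ε f i := by
        refine sum_le_sum fun i _ => ?_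
        by_cases h : uniformBallLaw μ ε f i = 0
        · simp [h]
        obtain ⟨U, hU, rfl⟩ := exists_of_uniformBallLaw_ne_zero μ h
        exact mul_le_mul_of_nonneg_right (hg U hU) (uniformBallLaw_nonneg μ _)
    _ = c := by rw [← mul_sum, sum_uniformBallLaw μ hε hf, mul_one]

end UniformBallLaw

section Channel

variable {n : Type*} [Fintype n]

lemma sum_abs_le_mul_sum_abs_vecMul [DecidableEq n] (A : Matrix n n ℝ) (hA : A.det ≠ 0)
    (v : n → ℝ) :
    ∑ i, |v i| ≤ (∑ i, √(∑ z, (A⁻¹ z i) ^ 2)) * ∑ z, |(v ᵥ* A) z| := by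
  have hv : (v ᵥ* A) ᵥ* A⁻¹ = v := by
    rw [vecMul_vecMul, mul_nonsing_inv A (isUnit_iff_ne_zero.2 hA), vecMul_one]
  rw [sum_mul]
  refine sum_le_sum fun i _ => ?_
  calc |v i| = |∑ z, (v ᵥ* A) z * A⁻¹ z i| := congrArg abs (congrFun hv i).symm
    _ ≤ ∑ z, |(v ᵥ* A) z| * |A⁻¹ z i| :=
      (abs_sum_le_sum_abs _ _).trans_eq (by simp only [abs_mul])
    _ ≤ ∑ z, |(v ᵥ* A) z| * √(∑ z', (A⁻¹ z' i) ^ 2) := by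
      refine sum_le_sum fun z _ => mul_le_mul_of_nonneg_left ?_ (abs_nonneg _)
      rw [← Real.sqrt_sq_eq_abs]
      exact Real.sqrt_le_sqrt (single_le_sum (f := fun z' => (A⁻¹ z' i) ^ 2)
        (fun _ _ => sq_nonneg _) (mem_univ z))
    _ = √(∑ z, (A⁻¹ z i) ^ 2) * ∑ z, |(v ᵥ* A) z| := by rw [← sum_mul, mul_comm]

noncomputable def channelExpectation (W : Matrix n n ℝ) (p : n → ℝ) (c : n → n → ℝ) : ℝ :=
  ∑ x, ∑ z, p x * W x z * c x z

noncomputable def posterior (W : Matrix n n ℝ) (p : n → ℝ) (z x : n) : ℝ :=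
  p x * W x z / (p ᵥ* W) z

variable {W : Matrix n n ℝ}

lemma channelExpectation_sub (p : n → ℝ) (c d : n → n → ℝ) :
    channelExpectation W p (fun x z => c x z - d x z) =
      channelExpectation W p c - channelExpectation W p d := by
  simp only [channelExpectation, mul_sub, sum_sub_distrib]

lemma channelExpectation_sub_le [DecidableEq n] (hW : W ∈ rowStochastic ℝ n) (p q : n → ℝ)
    {c d : n → n → ℝ} {L : ℝ} (hcd : ∀ x z, |c x z - d x z| ≤ L) :
    channelExpectation W p c - channelExpectation W p d ≤
      channelExpectation W q c - channelExpectation W q d + L * ∑ x, |p x - q x| := by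
  have hrow : ∀ x, |∑ z, W x z * (c x z - d x z)| ≤ L := fun x => calc
    _ ≤ ∑ z, |W x z * (c x z - d x z)| := abs_sum_le_sum_abs _ _
    _ = ∑ z, W x z * |c x z - d x z| := sum_congr rfl fun z _ => by
      rw [abs_mul, abs_of_nonneg (nonneg_of_mem_rowStochastic hW)]
    _ ≤ ∑ z, W x z * L := sum_le_sum fun z _ =>
      mul_le_mul_of_nonneg_left (hcd x z) (nonneg_of_mem_rowStochastic hW)
    _ = L := by rw [← sum_mul, sum_row_of_mem_rowStochastic hW, one_mul]
  have hdiff : channelExpectation W p (fun x z => c x z - d x z) -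
      channelExpectation W q (fun x z => c x z - d x z) =
        ∑ x, (p x - q x) * ∑ z, W x z * (c x z - d x z) := by
    simp only [channelExpectation, ← sum_sub_distrib, mul_sum]
    exact sum_congr rfl fun x _ => sum_congr rfl fun z _ => by ring
  rw [channelExpectation_sub, channelExpectation_sub] at hdiff
  have hbound : ∑ x, (p x - q x) * ∑ z, W x z * (c x z - d x z) ≤ L * ∑ x, |p x - q x| := by
    rw [mul_sum]
    refine sum_le_sum fun x _ => ?_
    calc _ ≤ |p x - q x| * |∑ z, W x z * (c x z - d x z)| := by
          rw [← abs_mul]; exact le_abs_self _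
      _ ≤ |p x - q x| * L := mul_le_mul_of_nonneg_left (hrow x) (abs_nonneg _)
      _ = L * |p x - q x| := mul_comm _ _
  linarith

lemma channelExpectation_eq_sum_posterior (p : n → ℝ) (hp : ∀ z, (p ᵥ* W) z ≠ 0)
    (c : n → n → ℝ) :
    channelExpectation W p c = ∑ z, (p ᵥ* W) z * ∑ x, c x z * posterior W p z x := by
  rw [channelExpectation, sum_comm]
  refine sum_congr rfl fun z _ => ?_
  rw [mul_sum]
  refine sum_congr rfl fun x _ => ?_
  rw [posterior]
  field_simp [hp z]

end Channel

section RandomizedBayes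

variable {M : ℕ} [NeZero M] (Λ : Fin M → Fin M → ℝ)

lemma bayesResponse_add_le (V : Fin M → ℝ) (U : EuclideanSpace ℝ (Fin M)) {C : ℝ}
    (hC : ∀ a b, √(∑ x, (Λ x a - Λ x b) ^ 2) ≤ C) (b : Fin M) :
    ∑ x, Λ x (bayesResponse Λ fun x => V x + U x) * V x ≤ ∑ x, Λ x b * V x + C * ‖U‖ := by
  set a := bayesResponse Λ fun x => V x + U x
  have hopt := bayesResponse_le Λ (fun x => V x + U x) b
  have hcs : ∑ x, (Λ x b - Λ x a) * U x ≤ C * ‖U‖ := calc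
    _ ≤ √(∑ x, (Λ x b - Λ x a) ^ 2) * √(∑ x, U x ^ 2) := Real.sum_mul_le_sqrt_mul_sqrt _ _ _
    _ = √(∑ x, (Λ x b - Λ x a) ^ 2) * ‖U‖ := by simp [EuclideanSpace.norm_eq]
    _ ≤ C * ‖U‖ := mul_le_mul_of_nonneg_right (hC b a) (norm_nonneg U)
  simp only [mul_add, sum_add_distrib] at hopt
  simp only [sub_mul, sum_sub_distrib] at hcs
  linarith

noncomputable def randomizedBayesResponse (ε : ℝ) (V : Fin M → ℝ) : Fin M → ℝ :=
  uniformBallLaw volume ε fun U : EuclideanSpace ℝ (Fin M) => bayesResponse Λ fun x => V x + U x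

lemma measurable_bayesResponse_add (V : Fin M → ℝ) :
    Measurable fun U : EuclideanSpace ℝ (Fin M) => bayesResponse Λ fun x => V x + U x :=
  (measurable_bayesResponse Λ).comp (by fun_prop)

lemma sum_mul_randomizedBayesResponse_le (V : Fin M → ℝ) {C ε : ℝ}
    (hC : ∀ a b, √(∑ x, (Λ x a - Λ x b) ^ 2) ≤ C) (hε : 0 < ε) (b : Fin M) :
    ∑ a, (∑ x, Λ x a * V x) * randomizedBayesResponse Λ ε V a ≤ ∑ x, Λ x b * V x + C * ε :=
  sum_mul_uniformBallLaw_le volume hε (measurable_bayesResponse_add Λ V) _ fun U hU =>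
    (bayesResponse_add_le Λ V U hC b).trans <|
      add_le_add_right (mul_le_mul_of_nonneg_left hU ((Real.sqrt_nonneg _).trans (hC b b))) _

lemma channelExpectation_randomizedBayes_sub_le {W : Matrix (Fin M) (Fin M) ℝ}
    (hW : W ∈ rowStochastic ℝ (Fin M)) {q : Fin M → ℝ} (hq : ∑ x, q x = 1)
    (hqW : ∀ z, 0 < (q ᵥ* W) z) {C ε : ℝ}
    (hC : ∀ a b, √(∑ x, (Λ x a - Λ x b) ^ 2) ≤ C) (hε : 0 < ε) (f : Fin M → Fin M) :
    channelExpectation W q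
        (fun x z => ∑ a, Λ x a * randomizedBayesResponse Λ ε (posterior W q z) a) -
      channelExpectation W q (fun x z => Λ x (f z)) ≤ C * ε := by
  have hmarginal : ∑ z, (q ᵥ* W) z = 1 := by
    simpa only [dotProduct_one] using
      vecMul_dotProduct_one_eq_one_rowStochastic hW (by rwa [dotProduct_one])
  have hz : ∀ z, ∑ x, (∑ a, Λ x a * randomizedBayesResponse Λ ε (posterior W q z) a -
      Λ x (f z)) * posterior W q z x ≤ C * ε := by
    intro z
    have := sum_mul_randomizedBayesResponse_le Λ (posterior W q z) hC hε (f z)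
    simp only [sum_mul, sub_mul, sum_sub_distrib] at this ⊢
    rw [sum_comm]
    simp only [mul_right_comm]
    linarith
  rw [← channelExpectation_sub, channelExpectation_eq_sum_posterior q fun z => (hqW z).ne']
  calc _ ≤ ∑ z, (q ᵥ* W) z * (C * ε) :=
        sum_le_sum fun z _ => mul_le_mul_of_nonneg_left (hz z) (hqW z).le
    _ = C * ε := by rw [← sum_mul, hmarginal, one_mul]

end RandomizedBayes

theorem randomized_mismatched_filter_excess_le_general
    {M : ℕ} [NeZero M]
    (Pm : Matrix (Fin M) (Fin M) ℝ) (hPm0 : ∀ i j, 0 < Pm i j)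
    (hProw : ∀ i, ∑ j, Pm i j = 1) (hdet : Pm.det ≠ 0)
    (PX QX : Fin M → ℝ) (hQX0 : ∀ x, 0 < QX x)
    (hQX1 : ∑ x, QX x = 1)
    (Λ : Fin M → Fin M → ℝ) (hΛ0 : ∀ i j, 0 ≤ Λ i j)
    (Λmax : ℝ) (hΛmax : ∀ i j, Λ i j ≤ Λmax)
    (CΛ : ℝ) (hCΛ : ∀ a b, Real.sqrt (∑ x, (Λ x a - Λ x b) ^ 2) ≤ CΛ)
    (ε : ℝ) (hε : 0 < ε)
    (μQ : Fin M → Fin M → ℝ)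
    (hμQ : ∀ z xh, μQ z xh =
      (volume {U : EuclideanSpace ℝ (Fin M) | ‖U‖ ≤ ε ∧
          bayesResponse Λ (fun x => QX x * Pm x z / (∑ x', QX x' * Pm x' z) + U x)
            = xh}).toReal
      / (volume {U : EuclideanSpace ℝ (Fin M) | ‖U‖ ≤ ε}).toReal)
    (fP : Fin M → Fin M) :
    (∑ x, ∑ z, PX x * Pm x z * (∑ xh, Λ x xh * μQ z xh))
      - (∑ x, ∑ z, PX x * Pm x z * Λ x (fP z))
    ≤ Λmax * (∑ i, Real.sqrt (∑ z, (Pm⁻¹ z i) ^ 2))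
        * (∑ z, |(∑ x, PX x * Pm x z) - (∑ x, QX x * Pm x z)|)
      + CΛ * ε := by
  have hW : Pm ∈ rowStochastic ℝ (Fin M) :=
    mem_rowStochastic_iff_sum.2 ⟨fun i j => (hPm0 i j).le, hProw⟩
  have hQZ : ∀ z, 0 < (QX ᵥ* Pm) z := fun z =>
    sum_pos (fun x _ => mul_pos (hQX0 x) (hPm0 x z)) univ_nonempty
  obtain rfl : μQ = fun z => randomizedBayesResponse Λ ε (posterior Pm QX z) := funext₂ hμQ
  have hloss : ∀ x z, |∑ a, Λ x a * randomizedBayesResponse Λ ε (posterior Pm QX z) a -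
      Λ x (fP z)| ≤ Λmax := fun x z =>
    abs_sub_le_of_nonneg_of_le
      (sum_nonneg fun a _ => mul_nonneg (hΛ0 x a) (uniformBallLaw_nonneg _ _))
      (sum_mul_uniformBallLaw_le volume hε (measurable_bayesResponse_add Λ _) _
        fun _ _ => hΛmax x _)
      (hΛ0 x (fP z)) (hΛmax x (fP z))
  have hK := sum_abs_le_mul_sum_abs_vecMul Pm hdet (PX - QX)
  rw [sub_vecMul] at hK
  calc _ ≤ _ := channelExpectation_sub_le hW PX QX hloss
    _ ≤ CΛ * ε + Λmax * ((∑ i, √(∑ z, (Pm⁻¹ z i) ^ 2)) *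
          ∑ z, |(∑ x, PX x * Pm x z) - ∑ x, QX x * Pm x z|) :=
      add_le_add (channelExpectation_randomizedBayes_sub_le Λ hW hQX1 hQZ hCΛ hε fP)
        (mul_le_mul_of_nonneg_left hK ((hΛ0 0 0).trans (hΛmax 0 0)))
    _ = _ := by ring

/-- combined bound. `E_P[ℓ(X, X̂_Q^ε(Z))] − E_P[ℓ(X, X̂_P(Z))]
≤ Λmax · K_Π · ‖P_Z − Q_Z‖₁ + C_Λ · ε`, where `X̂_Q^ε` is the ε-randomized
Bayes filter obtained by perturbing the posterior `Q_{X|z}` with `U` uniform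
on the L2 ε-ball, and `X̂_P` is the deterministic Bayes filter under `P`. -/
theorem randomized_mismatched_filter_excess_le
    {M : ℕ} [NeZero M]
    (Pm : Matrix (Fin M) (Fin M) ℝ) (hPm0 : ∀ i j, 0 < Pm i j)
    (hProw : ∀ i, ∑ j, Pm i j = 1) (hdet : Pm.det ≠ 0)
    (PX QX : Fin M → ℝ) (hPX0 : ∀ x, 0 ≤ PX x) (hQX0 : ∀ x, 0 < QX x)
    (hPX1 : ∑ x, PX x = 1) (hQX1 : ∑ x, QX x = 1)
    (Λ : Fin M → Fin M → ℝ) (hΛ0 : ∀ i j, 0 ≤ Λ i j)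
    (Λmax : ℝ) (hΛmax : ∀ i j, Λ i j ≤ Λmax)
    (CΛ : ℝ) (hCΛ : ∀ a b, Real.sqrt (∑ x, (Λ x a - Λ x b) ^ 2) ≤ CΛ)
    (ε : ℝ) (hε : 0 < ε)
    (μQ : Fin M → Fin M → ℝ)
    (hμQ : ∀ z xh, μQ z xh =
      (volume {U : EuclideanSpace ℝ (Fin M) | ‖U‖ ≤ ε ∧
          bayesResponse Λ (fun x => QX x * Pm x z / (∑ x', QX x' * Pm x' z) + U x)
            = xh}).toReal
      / (volume {U : EuclideanSpace ℝ (Fin M) | ‖U‖ ≤ ε}).toReal)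
    (fP : Fin M → Fin M)
    (hfP : ∀ z, fP z =
      bayesResponse Λ (fun x => PX x * Pm x z / (∑ x', PX x' * Pm x' z))) :
    (∑ x, ∑ z, PX x * Pm x z * (∑ xh, Λ x xh * μQ z xh))
      - (∑ x, ∑ z, PX x * Pm x z * Λ x (fP z))
    ≤ Λmax * (∑ i, Real.sqrt (∑ z, (Pm⁻¹ z i) ^ 2))
        * (∑ z, |(∑ x, PX x * Pm x z) - (∑ x, QX x * Pm x z)|)
      + CΛ * ε :=
  randomized_mismatched_filter_excess_le_general Pm hPm0 hProw hdet PX QX hQX0 hQX1 Λ hΛ0 Λmax hΛmax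
    CΛ hCΛ ε hε μQ hμQ fP
end

section
/- For a stationary ergodic process X with law P_X and its k-th order Markov approximation P_X^{(k)}, the relative entropy rate satisfies D(P_X ‖ P_X^{(k)}) = H_k − H∞, where H_k = H(X_0 | X_{−k}^{−1}) is the k-th order conditional entropy and H∞ = lim_k H_k is the entropy rate; consequently D(P_X ‖ P_X^{(k)}) → 0 as k → ∞. -/
open Finset Filter

/-- The window `x_{i}, …, x_{i+m-1}` of a length-`n` string, padded with an
arbitrary symbol out of range. -/
noncomputable def window {A : Type*} [Nonempty A] {n : ℕ}
    (x : Fin n → A) (i m : ℕ) : Fin m → A :=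
  fun j => if h : i + j.1 < n then x ⟨i + j.1, h⟩ else Classical.arbitrary A

/-- `k`-th order conditional entropy `H_k = H(X_k | X_0^{k-1})` (in bits) of a
process given by its family `μ` of finite-dimensional marginals. -/
noncomputable def condEntropy {A : Type*} [Fintype A]
    (μ : ∀ m, (Fin m → A) → ℝ) (k : ℕ) : ℝ :=
  ∑ x : Fin (k + 1) → A, μ (k + 1) x * Real.logb 2 (μ k (Fin.init x) / μ (k + 1) x)

/-- The `k`-th order Markov approximation of the `n`-block marginal of the
process `μ`. -/
noncomputable def markovApproxFam {A : Type*} [Fintype A] [Nonempty A]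
    (μ : ∀ m, (Fin m → A) → ℝ) (k n : ℕ) (x : Fin n → A) : ℝ :=
  μ k (window x 0 k) *
    ∏ i ∈ Finset.Ico k n, μ (k + 1) (window x (i - k) (k + 1)) / μ k (window x (i - k) k)

/-- The `n`-th order relative entropy (in bits) between the process `μ` and its
`k`-th order Markov approximation. -/
noncomputable def relEntMarkov {A : Type*} [Fintype A] [Nonempty A]
    (μ : ∀ m, (Fin m → A) → ℝ) (k n : ℕ) : ℝ :=
  ∑ x : Fin n → A, μ n x * Real.logb 2 (μ n x / markovApproxFam μ k n x)

/-!
The chain rule writes the block entropy `H(X^n)` as `∑_{m<n} H_m`. The log-likelihood ratio of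
the Markov approximation is a sum of logarithms of marginals evaluated on windows of `x`, and by
stationarity and consistency each window has the law of the corresponding marginal; hence
`D_n(P ‖ P^{(k)}) = H(X^k) - H(X^n) + (n - k) H_k` for `n ≥ k`. Dividing by `n`, Cesàro
averaging of `H_m → H∞` gives `H(X^n) / n → H∞`, and the rate is `H_k - H∞`.
-/

section Window

variable {A : Type*} [Nonempty A]

theorem window_eq_window_init {n : ℕ} (x : Fin (n + 1) → A) {j m : ℕ} (h : j + m ≤ n) :
    window x j m = window (Fin.init x) j m := by
  funext t
  have ht : j + t.1 < n := by omega
  simp only [window, dif_pos ht, dif_pos (Nat.lt_succ_of_lt ht)]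
  rfl

theorem window_succ_eq_window_tail {n : ℕ} (x : Fin (n + 1) → A) (j m : ℕ) :
    window x (j + 1) m = window (Fin.tail x) j m := by
  funext t
  by_cases ht : j + t.1 < n
  · have ht' : j + 1 + t.1 < n + 1 := by omega
    simp only [window, dif_pos ht, dif_pos ht', Fin.tail]
    congr 1
    ext
    simp only [Fin.val_succ]
    omega
  · have ht' : ¬j + 1 + t.1 < n + 1 := by omega
    simp only [window, dif_neg ht, dif_neg ht']

theorem window_zero_self {n : ℕ} (x : Fin n → A) : window x 0 n = x := by
  funext t
  simp only [window, Nat.zero_add, t.2, dif_pos]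

end Window

section Marginals

variable {A : Type*} [Fintype A] {μ : ∀ m, (Fin m → A) → ℝ}

theorem sum_mul_comp_init
    (hconsist : ∀ m (x : Fin m → A), ∑ a : A, μ (m + 1) (Fin.snoc x a) = μ m x)
    (n : ℕ) (f : (Fin n → A) → ℝ) :
    ∑ x : Fin (n + 1) → A, μ (n + 1) x * f (Fin.init x) =
      ∑ y : Fin n → A, μ n y * f y := by
  rw [← (Fin.snocEquiv fun _ => A).sum_comp, Fintype.sum_prod_type, Finset.sum_comm]
  refine Finset.sum_congr rfl fun y _ => ?_
  rw [← hconsist n y, Finset.sum_mul]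
  exact Finset.sum_congr rfl fun a _ => by simp [Fin.snocEquiv]

theorem sum_mul_comp_tail
    (hstat : ∀ m (x : Fin m → A), ∑ a : A, μ (m + 1) (Fin.cons a x) = μ m x)
    (n : ℕ) (f : (Fin n → A) → ℝ) :
    ∑ x : Fin (n + 1) → A, μ (n + 1) x * f (Fin.tail x) =
      ∑ y : Fin n → A, μ n y * f y := by
  rw [← (Fin.consEquiv fun _ => A).sum_comp, Fintype.sum_prod_type, Finset.sum_comm]
  refine Finset.sum_congr rfl fun y _ => ?_
  rw [← hstat n y, Finset.sum_mul]
  exact Finset.sum_congr rfl fun a _ => by simp [Fin.consEquiv]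

variable [Nonempty A]

theorem sum_mul_comp_window
    (hconsist : ∀ m (x : Fin m → A), ∑ a : A, μ (m + 1) (Fin.snoc x a) = μ m x)
    (hstat : ∀ m (x : Fin m → A), ∑ a : A, μ (m + 1) (Fin.cons a x) = μ m x)
    {n j m : ℕ} (h : j + m ≤ n) (f : (Fin m → A) → ℝ) :
    ∑ x : Fin n → A, μ n x * f (window x j m) = ∑ y : Fin m → A, μ m y * f y := by
  induction n generalizing j with
  | zero =>
    obtain ⟨rfl, rfl⟩ : j = 0 ∧ m = 0 := by omega
    simp only [window_zero_self]
  | succ n ih =>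
    cases j with
    | succ j =>
      simp only [window_succ_eq_window_tail]
      rw [sum_mul_comp_tail hstat n fun y => f (window y j m)]
      exact ih (by omega)
    | zero =>
      rcases Nat.lt_or_ge m (n + 1) with hm | hm
      · simp only [window_eq_window_init _ (by omega : 0 + m ≤ n)]
        rw [sum_mul_comp_init hconsist n fun y => f (window y 0 m)]
        exact ih (by omega)
      · obtain rfl : m = n + 1 := by omega
        simp only [window_zero_self]

end Marginals

section Entropy

variable {A : Type*} [Fintype A]

noncomputable def blockEntropy (μ : ∀ m, (Fin m → A) → ℝ) (n : ℕ) : ℝ :=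
  -∑ x : Fin n → A, μ n x * Real.logb 2 (μ n x)

variable {μ : ∀ m, (Fin m → A) → ℝ}

theorem condEntropy_eq_blockEntropy_sub (hpos : ∀ m x, 0 < μ m x)
    (hconsist : ∀ m (x : Fin m → A), ∑ a : A, μ (m + 1) (Fin.snoc x a) = μ m x) (k : ℕ) :
    condEntropy μ k = blockEntropy μ (k + 1) - blockEntropy μ k := by
  simp only [condEntropy, blockEntropy, Real.logb_div (hpos _ _).ne' (hpos _ _).ne', mul_sub,
    Finset.sum_sub_distrib, sum_mul_comp_init hconsist k fun y => Real.logb 2 (μ k y)]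
  ring

theorem blockEntropy_eq_sum_condEntropy (hpos : ∀ m x, 0 < μ m x)
    (hnorm : ∀ x : Fin 0 → A, μ 0 x = 1)
    (hconsist : ∀ m (x : Fin m → A), ∑ a : A, μ (m + 1) (Fin.snoc x a) = μ m x) (n : ℕ) :
    blockEntropy μ n = ∑ m ∈ Finset.range n, condEntropy μ m := by
  induction n with
  | zero => simp [blockEntropy, hnorm]
  | succ n ih =>
    rw [Finset.sum_range_succ, ← ih, condEntropy_eq_blockEntropy_sub hpos hconsist]
    ring

theorem tendsto_blockEntropy_div (hpos : ∀ m x, 0 < μ m x)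
    (hnorm : ∀ x : Fin 0 → A, μ 0 x = 1)
    (hconsist : ∀ m (x : Fin m → A), ∑ a : A, μ (m + 1) (Fin.snoc x a) = μ m x) {Hinf : ℝ}
    (hH : Tendsto (condEntropy μ) atTop (nhds Hinf)) :
    Tendsto (fun n : ℕ => blockEntropy μ n / n) atTop (nhds Hinf) :=
  hH.cesaro.congr fun n => by
    rw [blockEntropy_eq_sum_condEntropy hpos hnorm hconsist, div_eq_inv_mul]

variable [Nonempty A]

theorem sum_mul_logb_window
    (hconsist : ∀ m (x : Fin m → A), ∑ a : A, μ (m + 1) (Fin.snoc x a) = μ m x)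
    (hstat : ∀ m (x : Fin m → A), ∑ a : A, μ (m + 1) (Fin.cons a x) = μ m x)
    {n j m : ℕ} (h : j + m ≤ n) :
    ∑ x : Fin n → A, μ n x * Real.logb 2 (μ m (window x j m)) = -blockEntropy μ m := by
  rw [sum_mul_comp_window hconsist hstat h fun y => Real.logb 2 (μ m y), blockEntropy, neg_neg]

theorem logb_markovApproxFam (hpos : ∀ m x, 0 < μ m x) (k : ℕ) {n : ℕ} (x : Fin n → A) :
    Real.logb 2 (markovApproxFam μ k n x) = Real.logb 2 (μ k (window x 0 k)) +
      ∑ i ∈ Finset.Ico k n, (Real.logb 2 (μ (k + 1) (window x (i - k) (k + 1))) -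
        Real.logb 2 (μ k (window x (i - k) k))) := by
  have hratio : ∀ i ∈ Finset.Ico k n,
      0 < μ (k + 1) (window x (i - k) (k + 1)) / μ k (window x (i - k) k) :=
    fun i _ => div_pos (hpos _ _) (hpos _ _)
  rw [markovApproxFam, Real.logb_mul (hpos _ _).ne' (Finset.prod_pos hratio).ne',
    Real.logb_prod _ _ fun i hi => (hratio i hi).ne']
  simp only [Real.logb_div (hpos _ _).ne' (hpos _ _).ne']

theorem relEntMarkov_eq (hpos : ∀ m x, 0 < μ m x)
    (hconsist : ∀ m (x : Fin m → A), ∑ a : A, μ (m + 1) (Fin.snoc x a) = μ m x)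
    (hstat : ∀ m (x : Fin m → A), ∑ a : A, μ (m + 1) (Fin.cons a x) = μ m x)
    {k n : ℕ} (hkn : k ≤ n) :
    relEntMarkov μ k n =
      blockEntropy μ k - blockEntropy μ n + ((n : ℝ) - k) * condEntropy μ k := by
  have hmarkov : ∀ x, 0 < markovApproxFam μ k n x := fun x =>
    mul_pos (hpos _ _) (Finset.prod_pos fun i _ => div_pos (hpos _ _) (hpos _ _))
  have hterm : ∀ x : Fin n → A, μ n x * Real.logb 2 (μ n x / markovApproxFam μ k n x) =
      μ n x * Real.logb 2 (μ n x) - μ n x * Real.logb 2 (μ k (window x 0 k)) -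
        ∑ i ∈ Finset.Ico k n, (μ n x * Real.logb 2 (μ (k + 1) (window x (i - k) (k + 1))) -
          μ n x * Real.logb 2 (μ k (window x (i - k) k))) := fun x => by
    rw [Real.logb_div (hpos n x).ne' (hmarkov x).ne', logb_markovApproxFam hpos]
    simp only [mul_sub, mul_add, Finset.mul_sum]
    ring
  have hwindow : ∀ i ∈ Finset.Ico k n,
      ∑ x : Fin n → A, (μ n x * Real.logb 2 (μ (k + 1) (window x (i - k) (k + 1))) -
        μ n x * Real.logb 2 (μ k (window x (i - k) k))) = -condEntropy μ k := fun i hi => by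
    have hi := Finset.mem_Ico.mp hi
    rw [Finset.sum_sub_distrib, sum_mul_logb_window hconsist hstat (by omega),
      sum_mul_logb_window hconsist hstat (by omega), condEntropy_eq_blockEntropy_sub hpos hconsist]
    ring
  rw [relEntMarkov, Finset.sum_congr rfl fun x _ => hterm x, Finset.sum_sub_distrib,
    Finset.sum_sub_distrib, Finset.sum_comm, Finset.sum_congr rfl hwindow,
    sum_mul_logb_window hconsist hstat (by omega), Finset.sum_const, Nat.card_Ico, nsmul_eq_mul,
    Nat.cast_sub hkn]
  simp only [blockEntropy]
  ring

theorem tendsto_relEntMarkov_div (hpos : ∀ m x, 0 < μ m x)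
    (hnorm : ∀ x : Fin 0 → A, μ 0 x = 1)
    (hconsist : ∀ m (x : Fin m → A), ∑ a : A, μ (m + 1) (Fin.snoc x a) = μ m x)
    (hstat : ∀ m (x : Fin m → A), ∑ a : A, μ (m + 1) (Fin.cons a x) = μ m x) {Hinf : ℝ}
    (hH : Tendsto (condEntropy μ) atTop (nhds Hinf)) (k : ℕ) :
    Tendsto (fun n : ℕ => relEntMarkov μ k n / n) atTop (nhds (condEntropy μ k - Hinf)) := by
  have hk : Tendsto (fun n : ℕ => (k : ℝ) / n) atTop (nhds 0) :=
    tendsto_const_div_atTop_nhds_zero_nat _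
  have hlim := ((tendsto_const_div_atTop_nhds_zero_nat (blockEntropy μ k)).sub
    (tendsto_blockEntropy_div hpos hnorm hconsist hH)).add
    ((tendsto_const_nhds (x := (1 : ℝ)).sub hk).mul_const (condEntropy μ k))
  rw [show 0 - Hinf + (1 - 0) * condEntropy μ k = condEntropy μ k - Hinf by ring] at hlim
  refine hlim.congr' ?_
  filter_upwards [eventually_gt_atTop k] with n hkn
  have hn : (n : ℝ) ≠ 0 := Nat.cast_ne_zero.mpr (by omega)
  rw [relEntMarkov_eq hpos hconsist hstat hkn.le]
  field_simp

end Entropy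

theorem relative_entropy_rate_markov_approx_general
    {A : Type*} [Fintype A] [Nonempty A]
    (μ : ∀ m, (Fin m → A) → ℝ)
    (hpos : ∀ m x, 0 < μ m x)
    (hnorm : ∀ x : Fin 0 → A, μ 0 x = 1)
    (hconsist : ∀ m (x : Fin m → A), ∑ a : A, μ (m + 1) (Fin.snoc x a) = μ m x)
    (hstat : ∀ m (x : Fin m → A), ∑ a : A, μ (m + 1) (Fin.cons a x) = μ m x)
    (Hinf : ℝ)
    (hH : Tendsto (condEntropy μ) atTop (nhds Hinf)) :
    (∀ k, Tendsto (fun n => relEntMarkov μ k n / n) atTop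
        (nhds (condEntropy μ k - Hinf))) ∧
    Tendsto (fun k => condEntropy μ k - Hinf) atTop (nhds 0) :=
  ⟨tendsto_relEntMarkov_div hpos hnorm hconsist hstat hH, by simpa using hH.sub_const Hinf⟩

/-- for a stationary process with marginals `μ`, the relative
entropy rate between the process and its `k`-th order Markov approximation is
`H_k − H∞`, where `H∞` is the entropy rate (the limit of the nonincreasing
conditional entropies `H_k`); consequently this rate tends to `0` as `k → ∞`. -/
theorem relative_entropy_rate_markov_approx
    {A : Type*} [Fintype A] [Nonempty A]
    (μ : ∀ m, (Fin m → A) → ℝ)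
    (hpos : ∀ m x, 0 < μ m x)
    (hnorm : ∀ x : Fin 0 → A, μ 0 x = 1)
    (hconsist : ∀ m (x : Fin m → A), ∑ a : A, μ (m + 1) (Fin.snoc x a) = μ m x)
    (hstat : ∀ m (x : Fin m → A), ∑ a : A, μ (m + 1) (Fin.cons a x) = μ m x)
    (Hinf : ℝ) (hanti : Antitone (condEntropy μ))
    (hH : Tendsto (condEntropy μ) atTop (nhds Hinf)) :
    (∀ k, Tendsto (fun n => relEntMarkov μ k n / n) atTop
        (nhds (condEntropy μ k - Hinf))) ∧
    Tendsto (fun k => condEntropy μ k - Hinf) atTop (nhds 0) :=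
  relative_entropy_rate_markov_approx_general μ hpos hnorm hconsist hstat Hinf hH
end

section
/- (Conditional-probability lower bound for HMP, Lemma 6) Let Q be the law of a hidden Markov process on finite alphabet A (|A|=M) whose underlying Markov chain X has all allowed one-step transition probabilities ≥ δ (as k-th order chain viewed through k-tuple states), and whose channel satisfies Π(i,j) ≥ Π_min > 0. Then for all m ≥ k, all states i, j, and every bi-infinite observation z: Q(X_{t+m} = j | X_t = i, Z_{−∞}^{∞} = z) ≥ μ, where μ = (1 + (M−1)/(δ·Π_min)^{m+k})^{−1}, a bound independent of Q, z, i, j. -/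
open Finset

set_option maxHeartbeats 1000000 in
/-- Lemma 6, finite-horizon version: for a hidden Markov process
whose underlying chain has all transition probabilities `≥ δ` and whose channel
entries are `≥ Pmin`, the conditional probability of the state `m` steps ahead,
given the current state and the observations, is at least
`μ = (1 + (M−1)/(δ·Pmin)^{m+k})⁻¹`, uniformly in the law, the observations,
and the states. -/
theorem hmp_conditional_state_lower_bound
    {M : ℕ} (hM : 2 ≤ M) (k m N : ℕ) (hk : 1 ≤ k) (hkm : k ≤ m) (hmkN : m + k ≤ N)
    (δ Pmin : ℝ) (hδ : 0 < δ) (hPmin : 0 < Pmin)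
    (a : Fin M → Fin M → ℝ) (ha : ∀ i j, δ ≤ a i j) (harow : ∀ i, ∑ j, a i j = 1)
    (Pm : Fin M → Fin M → ℝ) (hPm : ∀ i j, Pmin ≤ Pm i j)
    (hProw : ∀ i, ∑ j, Pm i j = 1)
    (z : Fin (N + 1) → Fin M) (i j : Fin M) :
    (1 + ((M : ℝ) - 1) / (δ * Pmin) ^ (m + k))⁻¹ ≤
      (∑ x ∈ Finset.univ.filter (fun x : Fin (N + 1) → Fin M =>
          x ⟨0, by omega⟩ = i ∧ x ⟨m, by omega⟩ = j),
        (∏ t : Fin N, a (x t.castSucc) (x t.succ)) * ∏ t, Pm (x t) (z t))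
      /
      (∑ x ∈ Finset.univ.filter (fun x : Fin (N + 1) → Fin M =>
          x ⟨0, by omega⟩ = i),
        (∏ t : Fin N, a (x t.castSucc) (x t.succ)) * ∏ t, Pm (x t) (z t)) := by
  have hm1 : 1 ≤ m := le_trans hk hkm
  have hmN : m < N := by omega
  have apos : ∀ i' j', (0:ℝ) < a i' j' := fun i' j' => lt_of_lt_of_le hδ (ha i' j')
  have Ppos : ∀ i' j', (0:ℝ) < Pm i' j' := fun i' j' => lt_of_lt_of_le hPmin (hPm i' j')
  have aone : ∀ i' j', a i' j' ≤ 1 := by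
    intro i' j'
    rw [← harow i']
    exact Finset.single_le_sum (fun t _ => (apos i' t).le) (mem_univ j')
  have Pone : ∀ i' j', Pm i' j' ≤ 1 := by
    intro i' j'
    rw [← hProw i']
    exact Finset.single_le_sum (fun t _ => (Ppos i' t).le) (mem_univ j')
  have hδ1 : δ ≤ 1 := le_trans (ha i i) (aone i i)
  have hP1 : Pmin ≤ 1 := le_trans (hPm i i) (Pone i i)
  set p0 : Fin (N+1) := ⟨0, by omega⟩ with hp0def
  set pm : Fin (N+1) := ⟨m, by omega⟩ with hpmdef
  have hp0pm : p0 ≠ pm := by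
    simp only [hp0def, hpmdef, Fin.mk.injEq, ne_eq]
    omega
  set w : (Fin (N+1) → Fin M) → ℝ :=
    fun x => (∏ t : Fin N, a (x t.castSucc) (x t.succ)) * ∏ t, Pm (x t) (z t) with hwdef
  have wpos : ∀ x, 0 < w x := fun x =>
    mul_pos (Finset.prod_pos fun t _ => apos _ _) (Finset.prod_pos fun t _ => Ppos _ _)
  set S : Fin M → ℝ :=
    fun j' => ∑ x ∈ univ.filter (fun x : Fin (N+1) → Fin M => x p0 = i ∧ x pm = j'), w x
    with hSdef
  set D : ℝ := ∑ x ∈ univ.filter (fun x : Fin (N+1) → Fin M => x p0 = i), w x with hDdef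
  set C : ℝ := ((δ * Pmin) ^ (m + k))⁻¹ with hCdef
  have hCpos : 0 < C := by positivity
  have hdP1 : δ * Pmin ≤ 1 := by nlinarith
  have hC1 : (1:ℝ) ≤ C :=
    (one_le_inv₀ (by positivity)).mpr (pow_le_one₀ (by positivity) hdP1)
  -- decomposition of D into fibers
  have hDS : D = ∑ j', S j' := by
    rw [hDdef, hSdef, eq_comm]
    rw [← Finset.sum_fiberwise_of_maps_to (g := fun x : Fin (N+1) → Fin M => x pm)
      (fun x _ => mem_univ _) w]
    exact Finset.sum_congr rfl fun j' _ => by rw [Finset.filter_filter]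
  -- the key comparison S j' ≤ C * S j
  have key : ∀ j' : Fin M, S j' ≤ C * S j := by
    intro j'
    by_cases hjj : j' = j
    · subst hjj
      have : 0 ≤ S j' := Finset.sum_nonneg fun x _ => (wpos x).le
      nlinarith
    -- pointwise bound
    have hpoint : ∀ x : Fin (N+1) → Fin M, w x ≤ C * w (Function.update x pm j) := by
      intro x
      set y := Function.update x pm j with hy
      have hyne : ∀ t, t ≠ pm → y t = x t := fun t ht => Function.update_of_ne ht _ _
      have hypm : y pm = j := Function.update_self _ _ _
      set t1 : Fin N := ⟨m - 1, by omega⟩ with ht1def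
      set t2 : Fin N := ⟨m, hmN⟩ with ht2def
      have ht12 : t2 ≠ t1 := by
        simp only [ht1def, ht2def, Fin.mk.injEq, ne_eq]; omega
      have ht1cs : (t1.castSucc : Fin (N+1)) ≠ pm := by
        simp only [Fin.ext_iff, Fin.coe_castSucc, ht1def, hpmdef, ne_eq]; omega
      have ht1s : (t1.succ : Fin (N+1)) = pm := by
        simp only [Fin.ext_iff, Fin.val_succ, ht1def, hpmdef]; omega
      have ht2cs : (t2.castSucc : Fin (N+1)) = pm := by
        simp only [Fin.ext_iff, Fin.coe_castSucc, ht2def, hpmdef]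
      have ht2s : (t2.succ : Fin (N+1)) ≠ pm := by
        simp only [Fin.ext_iff, Fin.val_succ, ht2def, hpmdef, ne_eq]; omega
      have hsplitA : ∀ u : Fin (N+1) → Fin M,
          (∏ t : Fin N, a (u t.castSucc) (u t.succ)) =
            a (u t1.castSucc) (u t1.succ) * (a (u t2.castSucc) (u t2.succ) *
              ∏ t ∈ (univ.erase t1).erase t2, a (u t.castSucc) (u t.succ)) := by
        intro u
        rw [← Finset.mul_prod_erase univ _ (mem_univ t1),
          ← Finset.mul_prod_erase (univ.erase t1) _
            (Finset.mem_erase.mpr ⟨ht12, mem_univ t2⟩)]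
      have hsplitB : ∀ u : Fin (N+1) → Fin M,
          (∏ t, Pm (u t) (z t)) = Pm (u pm) (z pm) * ∏ t ∈ univ.erase pm, Pm (u t) (z t) := by
        intro u
        rw [← Finset.mul_prod_erase univ _ (mem_univ pm)]
      -- transition part
      have hRA : (∏ t ∈ (univ.erase t1).erase t2, a (y t.castSucc) (y t.succ)) =
          ∏ t ∈ (univ.erase t1).erase t2, a (x t.castSucc) (x t.succ) := by
        refine Finset.prod_congr rfl fun t ht => ?_
        have h1 : t ≠ t2 := (Finset.mem_erase.mp ht).1
        have h2 : t ≠ t1 := (Finset.mem_erase.mp (Finset.mem_erase.mp ht).2).1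
        have hcs : (t.castSucc : Fin (N+1)) ≠ pm := by
          simp only [Fin.ext_iff, Fin.coe_castSucc, hpmdef, ne_eq]
          intro h
          exact h1 (Fin.ext (by simpa [ht2def] using h))
        have hs : (t.succ : Fin (N+1)) ≠ pm := by
          simp only [Fin.ext_iff, Fin.val_succ, hpmdef, ne_eq]
          intro h
          exact h2 (Fin.ext (by simp only [ht1def]; omega))
        rw [hyne _ hcs, hyne _ hs]
      have hy1 : a (y t1.castSucc) (y t1.succ) = a (x t1.castSucc) j := by
        rw [hyne _ ht1cs, ht1s, hypm]
      have hy2 : a (y t2.castSucc) (y t2.succ) = a j (x t2.succ) := by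
        rw [ht2cs, hypm, hyne _ ht2s]
      have hA : δ * δ * (∏ t : Fin N, a (x t.castSucc) (x t.succ)) ≤
          ∏ t : Fin N, a (y t.castSucc) (y t.succ) := by
        rw [hsplitA x, hsplitA y, hRA, hy1, hy2]
        set R := ∏ t ∈ (univ.erase t1).erase t2, a (x t.castSucc) (x t.succ) with hR
        set f1 := a (x t1.castSucc) (x t1.succ) with hf1
        set f2 := a (x t2.castSucc) (x t2.succ) with hf2
        have hR0 : 0 < R := Finset.prod_pos fun t _ => apos _ _
        have h1 : f1 ≤ 1 := aone _ _
        have h2 : f2 ≤ 1 := aone _ _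
        have h1p : 0 < f1 := apos _ _
        have h2p : 0 < f2 := apos _ _
        have hg1 : δ ≤ a (x t1.castSucc) j := ha _ _
        have hg2 : δ ≤ a j (x t2.succ) := ha _ _
        have step1 : f1 * (f2 * R) ≤ R := by
          calc f1 * (f2 * R) ≤ f2 * R := mul_le_of_le_one_left (by positivity) h1
            _ ≤ R := mul_le_of_le_one_left hR0.le h2
        calc δ * δ * (f1 * (f2 * R)) ≤ δ * δ * R :=
              mul_le_mul_of_nonneg_left step1 (by positivity)
          _ = δ * (δ * R) := by ring
          _ ≤ a (x t1.castSucc) j * (a j (x t2.succ) * R) :=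
              mul_le_mul hg1 (mul_le_mul_of_nonneg_right hg2 hR0.le)
                (by positivity) (le_trans hδ.le hg1)
      -- emission part
      have hRB : (∏ t ∈ univ.erase pm, Pm (y t) (z t)) =
          ∏ t ∈ univ.erase pm, Pm (x t) (z t) :=
        Finset.prod_congr rfl fun t ht => by rw [hyne _ (Finset.mem_erase.mp ht).1]
      have hB : Pmin * (∏ t, Pm (x t) (z t)) ≤ ∏ t, Pm (y t) (z t) := by
        rw [hsplitB x, hsplitB y, hRB, hypm]
        set R := ∏ t ∈ univ.erase pm, Pm (x t) (z t) with hR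
        have hR0 : 0 < R := Finset.prod_pos fun t _ => Ppos _ _
        have h1 : Pm (x pm) (z pm) ≤ 1 := Pone _ _
        have hg : Pmin ≤ Pm j (z pm) := hPm _ _
        calc Pmin * (Pm (x pm) (z pm) * R) ≤ Pmin * R :=
              mul_le_mul_of_nonneg_left (mul_le_of_le_one_left hR0.le h1) hPmin.le
          _ ≤ Pm j (z pm) * R := mul_le_mul_of_nonneg_right hg hR0.le
      have hpowle : (δ * Pmin) ^ (m + k) ≤ δ * δ * Pmin := by
        calc (δ * Pmin) ^ (m + k) ≤ (δ * Pmin) ^ 2 :=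
              pow_le_pow_of_le_one (by positivity) hdP1 (by omega)
          _ ≤ δ * δ * Pmin := by nlinarith
      have hw : (δ * Pmin) ^ (m + k) * w x ≤ w y := by
        calc (δ * Pmin) ^ (m + k) * w x ≤ (δ * δ * Pmin) * w x :=
              mul_le_mul_of_nonneg_right hpowle (wpos x).le
          _ = (δ * δ * (∏ t : Fin N, a (x t.castSucc) (x t.succ))) *
                (Pmin * ∏ t, Pm (x t) (z t)) := by simp only [hwdef]; ring
          _ ≤ (∏ t : Fin N, a (y t.castSucc) (y t.succ)) * ∏ t, Pm (y t) (z t) :=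
              mul_le_mul hA hB (mul_pos hPmin (Finset.prod_pos fun t _ => Ppos _ _)).le
                (Finset.prod_pos fun t _ => apos _ _).le
          _ = w y := rfl
      have h2 : w x ≤ ((δ * Pmin) ^ (m + k))⁻¹ * w y := by
        rw [le_inv_mul_iff₀ (by positivity : (0:ℝ) < (δ * Pmin) ^ (m + k))]
        exact hw
      rw [hCdef]
      exact h2
    -- sum over the injection
    set s' := univ.filter (fun x : Fin (N+1) → Fin M => x p0 = i ∧ x pm = j') with hs'
    have hinj : ∀ x ∈ s', ∀ x' ∈ s',
        Function.update x pm j = Function.update x' pm j → x = x' := by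
      intro x hx x' hx' h
      have hxm : x pm = j' := (Finset.mem_filter.mp hx).2.2
      have hxm' : x' pm = j' := (Finset.mem_filter.mp hx').2.2
      funext t
      by_cases ht : t = pm
      · subst ht; rw [hxm, hxm']
      · have := congrFun h t
        rwa [Function.update_of_ne ht, Function.update_of_ne ht] at this
    have hsub : s'.image (fun x => Function.update x pm j) ⊆
        univ.filter (fun x : Fin (N+1) → Fin M => x p0 = i ∧ x pm = j) := by
      intro y hy
      obtain ⟨x, hx, rfl⟩ := Finset.mem_image.mp hy
      have hx0 : x p0 = i := (Finset.mem_filter.mp hx).2.1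
      refine Finset.mem_filter.mpr ⟨mem_univ _, ?_, Function.update_self _ _ _⟩
      rw [Function.update_of_ne hp0pm, hx0]
    calc S j' = ∑ x ∈ s', w x := rfl
      _ ≤ ∑ x ∈ s', C * w (Function.update x pm j) :=
          Finset.sum_le_sum fun x _ => hpoint x
      _ = C * ∑ x ∈ s', w (Function.update x pm j) := by rw [Finset.mul_sum]
      _ = C * ∑ y ∈ s'.image (fun x => Function.update x pm j), w y := by
          rw [Finset.sum_image hinj]
      _ ≤ C * S j := by
          refine mul_le_mul_of_nonneg_left ?_ hCpos.le
          exact Finset.sum_le_sum_of_subset_of_nonneg hsub fun y _ _ => (wpos y).le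
  -- positivity of S j and D
  have hx0mem : (Function.update (fun _ => i) pm j) ∈
      univ.filter (fun x : Fin (N+1) → Fin M => x p0 = i ∧ x pm = j) := by
    refine Finset.mem_filter.mpr ⟨mem_univ _, ?_, Function.update_self _ _ _⟩
    rw [Function.update_of_ne hp0pm]
  have hSj : 0 < S j := Finset.sum_pos (fun x _ => wpos x) ⟨_, hx0mem⟩
  have hD : 0 < D := by
    rw [hDS]
    refine Finset.sum_pos (fun j' _ => ?_) ⟨j, mem_univ j⟩
    refine Finset.sum_pos (fun x _ => wpos x) ?_
    refine ⟨Function.update (fun _ => i) pm j', Finset.mem_filter.mpr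
      ⟨mem_univ _, ?_, Function.update_self _ _ _⟩⟩
    rw [Function.update_of_ne hp0pm]
  -- combine
  have hDle : D ≤ (1 + ((M:ℝ) - 1) * C) * S j := by
    rw [hDS, ← Finset.add_sum_erase univ S (mem_univ j)]
    have h1 : ∑ j' ∈ univ.erase j, S j' ≤ ∑ j' ∈ univ.erase j, C * S j :=
      Finset.sum_le_sum fun j' _ => key j'
    rw [Finset.sum_const, Finset.card_erase_of_mem (mem_univ j), Finset.card_univ,
      Fintype.card_fin, nsmul_eq_mul] at h1
    have hcast : ((M - 1 : ℕ) : ℝ) = (M : ℝ) - 1 := by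
      have h : (1:ℕ) ≤ M := by omega
      push_cast [h]
      ring
    rw [hcast] at h1
    nlinarith
  have h1c : 0 < 1 + ((M:ℝ) - 1) * C := by
    have : (1:ℝ) ≤ (M:ℝ) := by exact_mod_cast Nat.one_le_of_lt hM
    nlinarith
  have hgoal : (1 + ((M:ℝ) - 1) * C)⁻¹ ≤ S j / D := by
    rw [le_div_iff₀ hD, inv_mul_le_iff₀ h1c]
    exact hDle
  have hlhs : 1 + ((M:ℝ) - 1) / (δ * Pmin) ^ (m + k) = 1 + ((M:ℝ) - 1) * C := by
    rw [hCdef, div_eq_mul_inv]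
  rw [hlhs]
  exact hgoal
end
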